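/- For C > 1, let D_C be the set of functions ψ ∈ L¹([0,1]) for which there exists an interval I ⊂ [0,1] with |I| ≥ 1/C such that ψ = 0 outside I, ψ > 0 on I, |ψ(x) − ψ(y)| ≤ C ψ(x)|x−y| for all x, y ∈ I, and ∫₀¹ ψ = 1. Then D_C is a compact subset of L¹([0,1]). -/

import Mathlib

/-!
On its support `[a, b]` a density `ψ ∈ D_C` satisfies `ψ y ≤ (1 + C) ψ x`, so `∫ ψ = 1` and
`1 / C ≤ b - a ≤ 1` pin it between `(1 + C)⁻¹` and `C (1 + C)`; it is then uniformly Lipschitz, and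
clamping to `[a, b]` extends it to a profile on `[0, 1]` in a bounded equi-Lipschitz, hence
(Arzelà–Ascoli) compact, family. So `D_C` is the unit sphere of `L¹` intersected with the image
of the compact set of pairs (endpoints, profile) under "restrict the profile to `[a, b]`", a map
that is continuous by dominated convergence.
-/

open MeasureTheory Set Filter Topology
open scoped BoundedContinuousFunction

noncomputable section

namespace UnitIntervalDensity

section MulLipschitz

variable {X : Type*} [PseudoMetricSpace X] {C : ℝ} {f : X → ℝ} {s : Set X}

def MulLipschitzOn (C : ℝ) (f : X → ℝ) (s : Set X) : Prop :=
  ∀ x ∈ s, ∀ y ∈ s, dist (f x) (f y) ≤ C * f x * dist x y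

theorem MulLipschitzOn.le_mul (hf : MulLipschitzOn C f s) {x y : X} (hx : x ∈ s) (hy : y ∈ s) :
    f y ≤ (1 + C * dist x y) * f x := by
  have h : f y - f x ≤ C * f x * dist x y :=
    (le_abs_self _).trans ((abs_sub_comm _ _).trans_le (hf x hx y hy))
  linarith

theorem MulLipschitzOn.lipschitzOnWith (hf : MulLipschitzOn C f s) (hC : 0 ≤ C) {M : ℝ}
    (hM : ∀ x ∈ s, f x ≤ M) : LipschitzOnWith (C * M).toNNReal f s :=
  .of_dist_le' fun x hx y hy => (hf x hx y hy).trans (by gcongr; exact hM x hx)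

theorem MulLipschitzOn.comp_lipschitzWith {Y : Type*} [PseudoMetricSpace Y]
    (hf : MulLipschitzOn C f s) (hnonneg : ∀ x ∈ s, 0 ≤ C * f x) {φ : Y → X}
    (hφ : LipschitzWith 1 φ) (hφs : ∀ y, φ y ∈ s) : MulLipschitzOn C (f ∘ φ) univ := by
  intro x _ y _
  refine (hf _ (hφs x) _ (hφs y)).trans ?_
  exact mul_le_mul_of_nonneg_left (by simpa using hφ.dist_le_mul x y) (hnonneg _ (hφs x))

theorem isCompact_setOf_mulLipschitzOn_univ [CompactSpace X] (hC : 0 ≤ C) (m M : ℝ) :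
    IsCompact {g : X →ᵇ ℝ | MulLipschitzOn C g univ ∧ ∀ x, g x ∈ Icc m M} := by
  refine BoundedContinuousFunction.arzela_ascoli₂ _ isCompact_Icc _ ?_ (fun g x hg => hg.2 x) ?_
  · have hev (x : X) : Continuous fun g : X →ᵇ ℝ => g x :=
      (BoundedContinuousFunction.lipschitz_eval_const x).continuous
    simp only [MulLipschitzOn, mem_univ, forall_const, ofPred_and, ofPred_forall]
    refine .inter (isClosed_iInter fun x => isClosed_iInter fun y => ?_)
      (isClosed_iInter fun x => isClosed_Icc.preimage (hev x))
    exact isClosed_le ((hev x).dist (hev y)) ((continuous_const.mul (hev x)).mul continuous_const)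
  · refine (LipschitzWith.uniformEquicontinuous _ (C * M).toNNReal fun g => ?_).equicontinuous
    exact lipschitzOnWith_univ.1 (g.2.1.lipschitzOnWith hC fun x _ => (g.2.2 x).2)

end MulLipschitz

theorem MulLipschitzOn.mem_Icc_of_setIntegral_eq_one {C a b : ℝ} {f : ℝ → ℝ}
    (hf : MulLipschitzOn C f (Icc a b)) (hC : 0 < C) (h0a : 0 ≤ a) (hb1 : b ≤ 1)
    (hlen : 1 / C ≤ b - a) (hnonneg : ∀ x ∈ Icc a b, 0 ≤ f x)
    (hint : ∫ x in Icc a b, f x = 1) {x : ℝ} (hx : x ∈ Icc a b) :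
    f x ∈ Icc (1 + C)⁻¹ (C * (1 + C)) := by
  have hab : a ≤ b := by linarith [one_div_pos.2 hC]
  have hfi : IntegrableOn f (Icc a b) := Integrable.of_integral_ne_zero (by simp [hint])
  have hcmp : ∀ y ∈ Icc a b, ∀ z ∈ Icc a b, f z ≤ (1 + C) * f y := by
    intro y hy z hz
    have hyz : dist y z ≤ 1 := by linarith [Real.dist_le_of_mem_Icc hy hz]
    refine (hf.le_mul hy hz).trans (mul_le_mul_of_nonneg_right ?_ (hnonneg y hy))
    nlinarith
  have hvol : volume.real (Icc a b) = b - a := Real.volume_real_Icc_of_le hab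
  have hupper : 1 ≤ (1 + C) * f x * (b - a) := calc
    1 = ∫ z in Icc a b, f z := hint.symm
    _ ≤ ∫ _ in Icc a b, (1 + C) * f x :=
      setIntegral_mono_on hfi (integrableOn_const measure_Icc_lt_top.ne) measurableSet_Icc
        fun z hz => hcmp x hx z hz
    _ = (1 + C) * f x * (b - a) := by rw [setIntegral_const, hvol, smul_eq_mul, mul_comm]
  have hlower : f x * (b - a) ≤ 1 + C := calc
    f x * (b - a) ≤ ∫ z in Icc a b, (1 + C) * f z := by
      rw [← hvol]
      exact setIntegral_ge_of_const_le_real measurableSet_Icc measure_Icc_lt_top.ne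
        (fun z hz => hcmp z hz x hx) (hfi.const_mul _)
    _ = 1 + C := by rw [integral_const_mul, hint, mul_one]
  have hfx := hnonneg x hx
  constructor
  · rw [inv_le_iff_one_le_mul₀ (by linarith)]
    nlinarith [mul_le_mul_of_nonneg_left (show b - a ≤ 1 by linarith) (mul_nonneg hC.le hfx)]
  · have := mul_le_mul_of_nonneg_left hlen hfx
    rw [mul_one_div, div_le_iff₀ hC] at this
    nlinarith

section L1

variable {α E : Type*} [MeasurableSpace α] {μ : Measure α} [NormedAddCommGroup E]

theorem tendsto_toLp_one_of_dominated [IsFiniteMeasure μ] {ι : Type*} {l : Filter ι}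
    [l.IsCountablyGenerated] {F : ι → α → E} {f : α → E} (hF : ∀ i, MemLp (F i) 1 μ)
    (hf : MemLp f 1 μ) (K : ℝ) (h_bound : ∀ᶠ i in l, ∀ᵐ x ∂μ, ‖F i x‖ ≤ K)
    (h_lim : ∀ᵐ x ∂μ, Tendsto (fun i => F i x) l (𝓝 (f x))) :
    Tendsto (fun i => (hF i).toLp (F i)) l (𝓝 (hf.toLp f)) := by
  have hdist (i : ι) : ‖(hF i).toLp (F i) - hf.toLp f‖ = ∫ x, ‖F i x - f x‖ ∂μ := by
    rw [← MemLp.toLp_sub, L1.norm_eq_integral_norm]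
    refine integral_congr_ae ?_
    filter_upwards [((hF i).sub hf).coeFn_toLp] with x hx
    rw [hx, Pi.sub_apply]
  rw [tendsto_iff_norm_sub_tendsto_zero]
  simp_rw [hdist]
  have h_bound' : ∀ᶠ i in l, ∀ᵐ x ∂μ, ‖‖F i x - f x‖‖ ≤ K + ‖f x‖ :=
    h_bound.mono fun i hi => hi.mono fun x hx => by
      rw [norm_norm]
      exact (norm_sub_le _ _).trans (add_le_add_left hx _)
  have h_lim' : ∀ᵐ x ∂μ, Tendsto (fun i => ‖F i x - f x‖) l (𝓝 0) :=
    h_lim.mono fun x hx => by simpa using (hx.sub_const (f x)).norm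
  simpa using tendsto_integral_filter_of_dominated_convergence (fun x => K + ‖f x‖)
    (Eventually.of_forall fun i => ((hF i).1.sub hf.1).norm) h_bound'
    ((integrable_const K).add (memLp_one_iff_integrable.1 hf).norm) h_lim'

theorem norm_toL1_eq_integral_of_nonneg {ψ : Lp ℝ 1 μ} {f : α → ℝ} (hψ : ψ =ᵐ[μ] f)
    (hf : 0 ≤ᵐ[μ] f) : ‖ψ‖ = ∫ x, f x ∂μ := by
  rw [L1.norm_eq_integral_norm]
  refine integral_congr_ae ?_
  filter_upwards [hψ, hf] with x hψx hfx
  rw [hψx, Real.norm_of_nonneg hfx]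

end L1

theorem tendsto_indicator_Icc_apply {ι E : Type*} [TopologicalSpace E] [Zero E] {l : Filter ι}
    {a b : ι → ℝ} {a₀ b₀ x : ℝ} {F : ι → ℝ → E} {f : ℝ → E} (ha : Tendsto a l (𝓝 a₀))
    (hb : Tendsto b l (𝓝 b₀)) (hxa : x ≠ a₀) (hxb : x ≠ b₀)
    (hF : Tendsto (fun i => F i x) l (𝓝 (f x))) :
    Tendsto (fun i => (Icc (a i) (b i)).indicator (F i) x) l (𝓝 ((Icc a₀ b₀).indicator f x)) := by
  by_cases hx : x ∈ Icc a₀ b₀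
  · have hx' : a₀ < x ∧ x < b₀ := ⟨hx.1.lt_of_ne hxa.symm, hx.2.lt_of_ne hxb⟩
    rw [indicator_of_mem hx]
    refine hF.congr' ?_
    filter_upwards [ha.eventually_lt_const hx'.1, hb.eventually_const_lt hx'.2] with i hai hbi
    rw [indicator_of_mem (show x ∈ Icc (a i) (b i) from ⟨hai.le, hbi.le⟩)]
  · have hx' : x < a₀ ∨ b₀ < x := by
      simp only [mem_Icc, not_and_or, not_le] at hx
      exact hx
    rw [indicator_of_notMem hx]
    refine tendsto_const_nhds.congr' ?_
    rcases hx' with hx' | hx'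
    · filter_upwards [ha.eventually_const_lt hx'] with i hi
      rw [indicator_of_notMem fun h => hi.not_ge h.1]
    · filter_upwards [hb.eventually_lt_const hx'] with i hi
      rw [indicator_of_notMem fun h => hi.not_ge h.2]

local notation "μI" => volume.restrict (Icc (0 : ℝ) 1)

/-- The paper's `D_C`. -/
def admissibleDensities (C : ℝ) : Set (Lp ℝ 1 μI) :=
  {ψ | ∃ f : ℝ → ℝ, (⇑ψ =ᵐ[μI] f) ∧
    ∃ a b : ℝ, 0 ≤ a ∧ a < b ∧ b ≤ 1 ∧ 1 / C ≤ b - a ∧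
      (∀ x ∈ Icc (0 : ℝ) 1 \ Icc a b, f x = 0) ∧ (∀ x ∈ Icc a b, 0 < f x) ∧
      MulLipschitzOn C f (Icc a b) ∧ ∫ x in Icc (0 : ℝ) 1, f x = 1}

def admissibleIntervals (C : ℝ) : Set (ℝ × ℝ) :=
  (Icc 0 1 ×ˢ Icc 0 1) ∩ {q | q.1 + 1 / C ≤ q.2}

def densityProfiles (C : ℝ) : Set (unitInterval →ᵇ ℝ) :=
  {g | MulLipschitzOn C g univ ∧ ∀ x, g x ∈ Icc (1 + C)⁻¹ (C * (1 + C))}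

def profileDensity (p : (ℝ × ℝ) × (unitInterval →ᵇ ℝ)) : ℝ → ℝ :=
  (Icc p.1.1 p.1.2).indicator (IccExtend zero_le_one p.2)

theorem norm_profileDensity_le (p : (ℝ × ℝ) × (unitInterval →ᵇ ℝ)) (x : ℝ) :
    ‖profileDensity p x‖ ≤ ‖p.2‖ :=
  (norm_indicator_le_norm_self _ x).trans (p.2.norm_coe_le_norm _)

theorem memLp_profileDensity (p : (ℝ × ℝ) × (unitInterval →ᵇ ℝ)) :
    MemLp (profileDensity p) 1 μI :=
  .of_bound ((p.2.continuous.Icc_extend' (h := zero_le_one)).stronglyMeasurable.indicator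
    measurableSet_Icc).aestronglyMeasurable ‖p.2‖ (.of_forall (norm_profileDensity_le p))

def profileDensityL1 (p : (ℝ × ℝ) × (unitInterval →ᵇ ℝ)) : Lp ℝ 1 μI :=
  (memLp_profileDensity p).toLp _

theorem profileDensity_of_mem {a b x : ℝ} {g : unitInterval →ᵇ ℝ} (hx : x ∈ Icc a b)
    (hx₀ : x ∈ unitInterval) : profileDensity ((a, b), g) x = g ⟨x, hx₀⟩ := by
  rw [profileDensity, indicator_of_mem hx, IccExtend_of_mem]

theorem isCompact_admissibleIntervals (C : ℝ) : IsCompact (admissibleIntervals C) :=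
  (isCompact_Icc.prod isCompact_Icc).inter_right <|
    isClosed_le (continuous_fst.add continuous_const) continuous_snd

theorem isCompact_densityProfiles {C : ℝ} (hC : 0 ≤ C) : IsCompact (densityProfiles C) :=
  isCompact_setOf_mulLipschitzOn_univ hC _ _

theorem continuous_profileDensityL1 : Continuous profileDensityL1 := by
  refine continuous_iff_continuousAt.2 fun ⟨⟨a, b⟩, g⟩ => ?_
  have hev (x : unitInterval) : Continuous fun p : (ℝ × ℝ) × (unitInterval →ᵇ ℝ) => p.2 x :=
    (BoundedContinuousFunction.lipschitz_eval_const x).continuous.comp continuous_snd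
  refine tendsto_toLp_one_of_dominated _ _ (‖g‖ + 1) ?_ ?_
  · filter_upwards [(continuous_norm.comp continuous_snd).continuousAt.eventually_lt
      continuousAt_const (lt_add_one ‖g‖)] with p hp
    exact .of_forall fun x => (norm_profileDensity_le p x).trans hp.le
  · filter_upwards [Measure.ae_ne _ a, Measure.ae_ne _ b] with x hxa hxb
    exact tendsto_indicator_Icc_apply (continuous_fst.comp continuous_fst).continuousAt
      (continuous_snd.comp continuous_fst).continuousAt hxa hxb (hev _).continuousAt

theorem exists_profileDensity_ae_eq {C : ℝ} (hC : 0 < C) {f : ℝ → ℝ} {a b : ℝ} (h0a : 0 ≤ a)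
    (hab : a < b) (hb1 : b ≤ 1) (hlen : 1 / C ≤ b - a)
    (hout : ∀ x ∈ Icc (0 : ℝ) 1 \ Icc a b, f x = 0) (hpos : ∀ x ∈ Icc a b, 0 < f x)
    (hf : MulLipschitzOn C f (Icc a b)) (hint : ∫ x in Icc (0 : ℝ) 1, f x = 1) :
    ∃ p ∈ admissibleIntervals C ×ˢ densityProfiles C, profileDensity p =ᵐ[μI] f := by
  have hsub : Icc a b ⊆ Icc 0 1 := Icc_subset_Icc h0a hb1
  have hint' : ∫ x in Icc a b, f x = 1 := by
    rw [← hint, setIntegral_eq_of_subset_of_forall_sdiff_eq_zero measurableSet_Icc hsub hout]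
  have hbounds (x : ℝ) (hx : x ∈ Icc a b) : f x ∈ Icc (1 + C)⁻¹ (C * (1 + C)) :=
    hf.mem_Icc_of_setIntegral_eq_one hC h0a hb1 hlen (fun y hy => (hpos y hy).le) hint' hx
  set φ : unitInterval → ℝ := fun x => projIcc a b hab.le x
  have hφ : LipschitzWith 1 φ := by
    have h := (LipschitzWith.subtype_val _).comp
      ((LipschitzWith.projIcc hab.le).comp (LipschitzWith.subtype_val unitInterval))
    rwa [mul_one, mul_one] at h
  have hφab (x : unitInterval) : φ x ∈ Icc a b := (projIcc a b hab.le x).2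
  have hg : MulLipschitzOn C (f ∘ φ) univ :=
    hf.comp_lipschitzWith (fun x hx => mul_nonneg hC.le (hpos x hx).le) hφ hφab
  have hg_cont : Continuous (f ∘ φ) := (lipschitzOnWith_univ.1 <|
    hg.lipschitzOnWith hC.le fun x _ => (hbounds _ (hφab x)).2).continuous
  refine ⟨((a, b), .mkOfCompact ⟨f ∘ φ, hg_cont⟩),
    ⟨⟨⟨⟨h0a, hab.le.trans hb1⟩, ⟨h0a.trans hab.le, hb1⟩⟩, show a + 1 / C ≤ b by linarith⟩,
      hg, fun x => hbounds _ (hφab x)⟩, ?_⟩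
  refine ae_restrict_of_forall_mem measurableSet_Icc fun x hx => ?_
  by_cases hxab : x ∈ Icc a b
  · rw [profileDensity_of_mem hxab hx]
    simp [φ, projIcc_of_mem hab.le hxab]
  · rw [profileDensity, indicator_of_notMem hxab, hout x ⟨hx, hxab⟩]

theorem profileDensityL1_mem_admissibleDensities {C : ℝ} (hC : 0 < C)
    {p : (ℝ × ℝ) × (unitInterval →ᵇ ℝ)} (hp : p ∈ admissibleIntervals C ×ˢ densityProfiles C)
    (hnorm : ‖profileDensityL1 p‖ = 1) : profileDensityL1 p ∈ admissibleDensities C := by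
  obtain ⟨⟨a, b⟩, g⟩ := p
  simp only [admissibleIntervals, densityProfiles, mem_prod, mem_inter_iff, mem_Icc,
    mem_ofPred_eq] at hp
  obtain ⟨⟨⟨⟨h0a, -⟩, ⟨-, hb1⟩⟩, hlen⟩, hg, hg_bounds⟩ := hp
  have hsub : Icc a b ⊆ unitInterval := Icc_subset_Icc h0a hb1
  have hg_pos (x : unitInterval) : 0 < g x := (inv_pos.2 (by linarith)).trans_le (hg_bounds x).1
  have hnonneg : 0 ≤ᵐ[μI] profileDensity ((a, b), g) :=
    ae_restrict_of_forall_mem measurableSet_Icc fun x hx => by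
      by_cases hxab : x ∈ Icc a b
      · exact (profileDensity_of_mem hxab hx).symm ▸ (hg_pos _).le
      · simp [profileDensity, hxab]
  refine ⟨_, MemLp.coeFn_toLp _, a, b, h0a, by linarith [one_div_pos.2 hC], hb1, by linarith,
    fun x hx => indicator_of_notMem hx.2 _, fun x hx => ?_, fun x hx y hy => ?_, ?_⟩
  · exact (profileDensity_of_mem hx (hsub hx)).symm ▸ hg_pos _
  · rw [profileDensity_of_mem hx (hsub hx), profileDensity_of_mem hy (hsub hy)]
    exact hg _ trivial _ trivial
  · rw [← norm_toL1_eq_integral_of_nonneg (MemLp.coeFn_toLp _) hnonneg]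
    exact hnorm

theorem admissibleDensities_eq {C : ℝ} (hC : 0 < C) :
    admissibleDensities C =
      profileDensityL1 '' (admissibleIntervals C ×ˢ densityProfiles C) ∩ Metric.sphere 0 1 := by
  ext ψ
  constructor
  · rintro ⟨f, hψf, a, b, h0a, hab, hb1, hlen, hout, hpos, hf, hint⟩
    obtain ⟨p, hp, hpf⟩ := exists_profileDensity_ae_eq hC h0a hab hb1 hlen hout hpos hf hint
    have hψ : ψ = profileDensityL1 p :=
      Lp.ext (hψf.trans (hpf.symm.trans (MemLp.coeFn_toLp _).symm))
    have hnonneg : 0 ≤ᵐ[μI] f := ae_restrict_of_forall_mem measurableSet_Icc fun x hx => by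
      by_cases hxab : x ∈ Icc a b
      · exact (hpos x hxab).le
      · exact (hout x ⟨hx, hxab⟩).ge
    refine ⟨⟨p, hp, hψ.symm⟩, ?_⟩
    rw [mem_sphere_zero_iff_norm, norm_toL1_eq_integral_of_nonneg hψf hnonneg, hint]
  · rintro ⟨⟨p, hp, rfl⟩, hnorm⟩
    exact profileDensityL1_mem_admissibleDensities hC hp (mem_sphere_zero_iff_norm.1 hnorm)

end UnitIntervalDensity

open UnitIntervalDensity in
/-- Lemma 3.6: the family of normalized, multiplicatively Lipschitz densities
supported on an interval of definite length is compact in L¹([0,1]). -/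
theorem stmt_8 (C : ℝ) (hC : 1 < C) :
    IsCompact {ψ : Lp ℝ 1 (volume.restrict (Icc (0:ℝ) 1)) |
      ∃ f : ℝ → ℝ,
        (⇑ψ =ᵐ[volume.restrict (Icc (0:ℝ) 1)] f) ∧
        ∃ a b : ℝ, 0 ≤ a ∧ a < b ∧ b ≤ 1 ∧ 1 / C ≤ b - a ∧
          (∀ x ∈ Icc (0:ℝ) 1 \ Icc a b, f x = 0) ∧
          (∀ x ∈ Icc a b, 0 < f x) ∧
          (∀ x ∈ Icc a b, ∀ y ∈ Icc a b, |f x - f y| ≤ C * f x * |x - y|) ∧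
          (∫ x in Icc (0:ℝ) 1, f x = 1)} := by
  have hC₀ : 0 < C := by linarith
  change IsCompact (admissibleDensities C)
  rw [admissibleDensities_eq hC₀]
  exact ((isCompact_admissibleIntervals C).prod (isCompact_densityProfiles hC₀.le)).image
    continuous_profileDensityL1 |>.inter_right Metric.isClosed_sphere
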